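/- arXiv:1708.04227 — 7 statements merged into one kernel-verified Lean document; each statement's English description precedes it below -/
import Mathlib

section
/- Let C be a (0,4)-tensor on an inner product space with the symmetries of the Weyl tensor (antisymmetric in the first two and last two slots, symmetric under pair exchange, first Bianchi identity, and totally trace-free). If a covector X satisfies X_i C_{jklm} + X_j C_{kilm} + X_k C_{ijlm} = 0 for all indices, then X^m C_{jklm} = 0. -/
/-- If a covector `X` satisfies the Olszak condition
`X_i C_{jklm} + X_j C_{kilm} + X_k C_{ijlm} = 0` for a tensor `C` with the
symmetries of the Weyl tensor, then `X^m C_{jklm} = 0`. -/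
theorem stmt_1 {ι : Type*} [Fintype ι] [DecidableEq ι]
    (g ginv : ι → ι → ℝ)
    (hgsym : ∀ i j, g i j = g j i)
    (hginvsym : ∀ i j, ginv i j = ginv j i)
    (hginv : ∀ i j, ∑ k, g i k * ginv k j = if i = j then (1 : ℝ) else 0)
    (C : ι → ι → ι → ι → ℝ)
    (hA1 : ∀ j k l m, C j k l m = - C k j l m)
    (hA2 : ∀ j k l m, C j k l m = - C j k m l)
    (hPair : ∀ j k l m, C j k l m = C l m j k)
    (hBianchi : ∀ j k l m, C j k l m + C k l j m + C l j k m = 0)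
    (hTrace : ∀ k m, ∑ j, ∑ l, ginv j l * C j k l m = 0)
    (X : ι → ℝ)
    (hOlszak : ∀ i j k l m,
      X i * C j k l m + X j * C k i l m + X k * C i j l m = 0) :
    ∀ j k l, ∑ m, ∑ m', ginv m m' * X m' * C j k l m = 0 := by
  -- contraction over slots 2 and 4 vanishes
  have T24 : ∀ k l, ∑ i, ∑ m, ginv i m * C k i l m = 0 := by
    intro k l
    have : ∀ i m, ginv i m * C k i l m = ginv i m * C i k m l := by
      intro i m
      rw [hA1 i k m l, hA2 k i m l]
      ring
    simp_rw [this]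
    exact hTrace k l
  -- contraction over slots 3 and 4 vanishes
  have T34 : ∀ j l, ∑ i, ∑ m, ginv i m * C j l i m = 0 := by
    intro j l
    have h : (∑ i, ∑ m, ginv i m * C j l i m)
        = ∑ i, ∑ m, -(ginv i m * C j l i m) := by
      rw [Finset.sum_comm]
      refine Finset.sum_congr rfl fun m _ => Finset.sum_congr rfl fun i _ => ?_
      rw [hginvsym m i, hA2 j l i m]; ring
    simp only [Finset.sum_neg_distrib] at h
    linarith
  -- contraction over slots 1 and 4 vanishes (Bianchi)
  have T14 : ∀ j l, ∑ i, ∑ m, ginv i m * C i j l m = 0 := by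
    intro j l
    have h : ∑ i, ∑ m, ginv i m * (C i j l m + C j l i m + C l i j m) = 0 := by
      simp_rw [hBianchi, mul_zero, Finset.sum_const_zero]
    have expand : ∀ i m, ginv i m * (C i j l m + C j l i m + C l i j m)
        = ginv i m * C i j l m + ginv i m * C j l i m + ginv i m * C l i j m := by
      intro i m; ring
    simp_rw [expand, Finset.sum_add_distrib] at h
    rw [T34 j l, T24 l j] at h
    linarith
  intro j k l
  have h : ∑ i, ∑ m, ginv i m *
      (X i * C j k l m + X j * C k i l m + X k * C i j l m) = 0 := by
    simp_rw [hOlszak, mul_zero, Finset.sum_const_zero]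
  have expand : ∀ i m, ginv i m *
      (X i * C j k l m + X j * C k i l m + X k * C i j l m)
      = ginv i m * X i * C j k l m + X j * (ginv i m * C k i l m)
        + X k * (ginv i m * C i j l m) := by
    intro i m; ring
  simp_rw [expand, Finset.sum_add_distrib, ← Finset.mul_sum] at h
  rw [T24 k l, T14 j l, mul_zero, mul_zero, add_zero, add_zero] at h
  rw [Finset.sum_comm] at h
  calc ∑ m, ∑ m', ginv m m' * X m' * C j k l m
      = ∑ m, ∑ m', ginv m' m * X m' * C j k l m := by
        simp_rw [hginvsym]
    _ = 0 := h
end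

section
/- Let C be a nonzero (0,4)-tensor with Weyl symmetries on an inner product space, and suppose the covector X satisfies the Olszak condition X_i C_{jklm} + X_j C_{kilm} + X_k C_{ijlm} = 0. Then X is null: X^i X_i = 0. -/
private lemma sum_pull3 {ι : Type*} [Fintype ι] (F : ι → ι → ι → ℝ) :
    ∑ j : ι, ∑ l : ι, ∑ a : ι, F j l a = ∑ a : ι, ∑ j : ι, ∑ l : ι, F j l a :=
  (Finset.sum_congr rfl fun _ _ => Finset.sum_comm).trans Finset.sum_comm

private lemma anti_contract {ι : Type*} [Fintype ι] (Y : ι → ℝ) (T : ι → ι → ℝ)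
    (hT : ∀ a b, T a b = - T b a) :
    ∑ a : ι, ∑ b : ι, Y a * Y b * T a b = 0 := by
  have h : (∑ a : ι, ∑ b : ι, Y a * Y b * T a b)
      = - ∑ a : ι, ∑ b : ι, Y a * Y b * T a b := by
    conv_lhs => rw [Finset.sum_comm]
    rw [← Finset.sum_neg_distrib]
    refine Finset.sum_congr rfl fun b _ => ?_
    rw [← Finset.sum_neg_distrib]
    refine Finset.sum_congr rfl fun a _ => ?_
    rw [hT a b]; ring
  linarith

/-- If a covector `X` satisfies the Olszak condition for a nonzero tensor `C` with Weyl
symmetries, then `X` is null: `X^i X_i = 0`. -/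
theorem stmt_2 {ι : Type*} [Fintype ι] [DecidableEq ι]
    (g ginv : ι → ι → ℝ)
    (hgsym : ∀ i j, g i j = g j i)
    (hginvsym : ∀ i j, ginv i j = ginv j i)
    (hginv : ∀ i j, ∑ k, g i k * ginv k j = if i = j then (1 : ℝ) else 0)
    (C : ι → ι → ι → ι → ℝ)
    (hA1 : ∀ j k l m, C j k l m = - C k j l m)
    (hA2 : ∀ j k l m, C j k l m = - C j k m l)
    (hPair : ∀ j k l m, C j k l m = C l m j k)
    (hBianchi : ∀ j k l m, C j k l m + C k l j m + C l j k m = 0)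
    (hTrace : ∀ k m, ∑ j, ∑ l, ginv j l * C j k l m = 0)
    (hC : ∃ j k l m, C j k l m ≠ 0)
    (X : ι → ℝ)
    (hOlszak : ∀ i j k l m,
      X i * C j k l m + X j * C k i l m + X k * C i j l m = 0) :
    ∑ i, ∑ i', ginv i i' * X i * X i' = 0 := by
  classical
  set Xup : ι → ℝ := fun i => ∑ i', ginv i i' * X i' with hXup
  set P : ι → ι → ι → ℝ := fun j k l => ∑ i, Xup i * C j k l i with hP
  set Q : ι → ι → ℝ := fun k l => ∑ j, Xup j * P j k l with hQ
  set s0 : ℝ := ∑ i, Xup i * X i with hs0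
  have hgoal : (∑ i, ∑ i', ginv i i' * X i * X i') = s0 := by
    rw [hs0]
    refine Finset.sum_congr rfl fun i _ => ?_
    simp only [hXup]
    rw [Finset.sum_mul]
    exact Finset.sum_congr rfl fun i' _ => by ring
  have hXl : ∀ l, (∑ j, ginv j l * X j) = Xup l := by
    intro l
    simp only [hXup]
    exact Finset.sum_congr rfl fun j _ => by rw [hginvsym]
  -- Olszak condition on the second pair of indices
  have hOl2 : ∀ i j k l m, X i * C j k l m + X l * C j k m i + X m * C j k i l = 0 := by
    intro i j k l m
    have h := hOlszak i l m j k
    rw [hPair l m j k, hPair m i j k, hPair i l j k] at h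
    exact h
  -- first contracted Olszak identity
  have eq1 : ∀ j k l m, s0 * C j k l m
      = X j * (∑ i, Xup i * C i k l m) - X k * (∑ i, Xup i * C i j l m) := by
    intro j k l m
    have h0 : (∑ i, Xup i * (X i * C j k l m + X j * C k i l m + X k * C i j l m)) = 0 := by
      simp only [hOlszak, mul_zero, Finset.sum_const_zero]
    have h1 : s0 * C j k l m - X j * (∑ i, Xup i * C i k l m)
        + X k * (∑ i, Xup i * C i j l m) = 0 := by
      rw [hs0, Finset.sum_mul, Finset.mul_sum, Finset.mul_sum,
        ← Finset.sum_sub_distrib, ← Finset.sum_add_distrib, ← h0]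
      exact Finset.sum_congr rfl fun i _ => by rw [hA1 k i l m]; ring
    linarith
  -- second contracted Olszak identity
  have eq2 : ∀ j k l m, s0 * C j k l m = X m * P j k l - X l * P j k m := by
    intro j k l m
    have h0 : (∑ i, Xup i * (X i * C j k l m + X l * C j k m i + X m * C j k i l)) = 0 := by
      simp only [hOl2, mul_zero, Finset.sum_const_zero]
    have h1 : s0 * C j k l m + X l * P j k m - X m * P j k l = 0 := by
      simp only [hP]
      rw [hs0, Finset.sum_mul, Finset.mul_sum, Finset.mul_sum,
        ← Finset.sum_add_distrib, ← Finset.sum_sub_distrib, ← h0]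
      exact Finset.sum_congr rfl fun i _ => by rw [hA2 j k i l]; ring
    linarith
  -- doubly contracted identity
  have eq3 : ∀ k l m, s0 * (∑ i, Xup i * C i k l m) = X m * Q k l - X l * Q k m := by
    intro k l m
    rw [Finset.mul_sum]
    have hterm : ∀ j, s0 * (Xup j * C j k l m)
        = Xup j * (X m * P j k l) - Xup j * (X l * P j k m) := by
      intro j
      have h := eq2 j k l m
      linear_combination Xup j * h
    rw [Finset.sum_congr rfl fun j _ => hterm j, Finset.sum_sub_distrib]
    simp only [hQ]
    rw [Finset.mul_sum, Finset.mul_sum]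
    refine congrArg₂ (· - ·) ?_ ?_ <;>
      exact Finset.sum_congr rfl fun j _ => by ring
  have eq4 : ∀ j k l m, s0 ^ 2 * C j k l m
      = X j * (X m * Q k l) - X j * (X l * Q k m)
        - (X k * X m) * Q j l + X l * (X k * Q j m) := by
    intro j k l m
    have h1 := eq1 j k l m
    have h2 := eq3 k l m
    have h3 := eq3 j l m
    calc s0 ^ 2 * C j k l m
        = X j * (s0 * (∑ i, Xup i * C i k l m))
          - X k * (s0 * (∑ i, Xup i * C i j l m)) := by linear_combination s0 * h1
      _ = X j * (X m * Q k l) - X j * (X l * Q k m)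
          - (X k * X m) * Q j l + X l * (X k * Q j m) := by rw [h2, h3]; ring
  -- contraction helpers
  have contr1 : ∀ f : ι → ℝ, (∑ j, ∑ l, ginv j l * (X j * f l)) = ∑ l, Xup l * f l := by
    intro f
    rw [Finset.sum_comm]
    refine Finset.sum_congr rfl fun l _ => ?_
    rw [← hXl l, Finset.sum_mul]
    exact Finset.sum_congr rfl fun j _ => by ring
  have contr2 : ∀ f : ι → ℝ, (∑ j, ∑ l, ginv j l * (X l * f j)) = ∑ j, Xup j * f j := by
    intro f
    refine Finset.sum_congr rfl fun j _ => ?_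
    simp only [hXup]
    rw [Finset.sum_mul]
    exact Finset.sum_congr rfl fun l _ => by ring
  -- antisymmetry of P in the first two slots
  have hPanti : ∀ a b c, P a b c = - P b a c := by
    intro a b c
    simp only [hP]
    rw [← Finset.sum_neg_distrib]
    exact Finset.sum_congr rfl fun i _ => by rw [hA1 a b c i]; ring
  -- X-contraction of Q in the first slot vanishes
  have fR : ∀ m, (∑ j, Xup j * Q j m) = 0 := by
    intro m
    have h := anti_contract Xup (fun j a => P a j m) (fun j a => by simpa using hPanti a j m)
    rw [← h]
    refine Finset.sum_congr rfl fun j _ => ?_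
    simp only [hQ]
    rw [Finset.mul_sum]
    exact Finset.sum_congr rfl fun a _ => by ring
  have inner0 : ∀ j k, (∑ l, Xup l * P j k l) = 0 := by
    intro j k
    have h := anti_contract Xup (fun l i => C j k l i) (fun l i => hA2 j k l i)
    rw [← h]
    refine Finset.sum_congr rfl fun l _ => ?_
    simp only [hP]
    rw [Finset.mul_sum]
    exact Finset.sum_congr rfl fun i _ => by ring
  -- X-contraction of Q in the second slot vanishes
  have fQ2 : ∀ k, (∑ l, Xup l * Q k l) = 0 := by
    intro k
    have e : (∑ l, Xup l * Q k l) = ∑ j, Xup j * (∑ l, Xup l * P j k l) := by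
      simp only [hQ]
      rw [show (∑ l, Xup l * ∑ j, Xup j * P j k l)
          = ∑ l, ∑ j, Xup l * (Xup j * P j k l) from
        Finset.sum_congr rfl fun l _ => Finset.mul_sum _ _ _]
      rw [Finset.sum_comm]
      refine Finset.sum_congr rfl fun j _ => ?_
      rw [Finset.mul_sum]
      exact Finset.sum_congr rfl fun l _ => by ring
    rw [e]
    simp only [inner0, mul_zero, Finset.sum_const_zero]
  -- trace-free in slots (2,3)
  have hTr2 : ∀ a i, (∑ j, ∑ l, ginv j l * C a j l i) = 0 := by
    intro a i
    have e : (∑ j, ∑ l, ginv j l * C a j l i) = - ∑ j, ∑ l, ginv j l * C j a l i := by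
      rw [← Finset.sum_neg_distrib]
      refine Finset.sum_congr rfl fun j _ => ?_
      rw [← Finset.sum_neg_distrib]
      exact Finset.sum_congr rfl fun l _ => by rw [hA1 a j l i]; ring
    rw [e, hTrace a i, neg_zero]
  -- the g-trace of Q vanishes
  have fQtrace : (∑ j, ∑ l, ginv j l * Q j l) = 0 := by
    have e2 : ∀ a, (∑ j, ∑ l, ginv j l * P a j l) = 0 := by
      intro a
      have e3 : (∑ j, ∑ l, ginv j l * P a j l)
          = ∑ i, Xup i * (∑ j, ∑ l, ginv j l * C a j l i) := by
        simp only [hP]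
        rw [show (∑ j, ∑ l, ginv j l * ∑ i, Xup i * C a j l i)
            = ∑ j, ∑ l, ∑ i, ginv j l * (Xup i * C a j l i) from
          Finset.sum_congr rfl fun j _ => Finset.sum_congr rfl fun l _ => Finset.mul_sum _ _ _]
        rw [sum_pull3]
        refine Finset.sum_congr rfl fun i _ => ?_
        rw [Finset.mul_sum]
        refine Finset.sum_congr rfl fun j _ => ?_
        rw [Finset.mul_sum]
        exact Finset.sum_congr rfl fun l _ => by ring
      rw [e3]
      simp only [hTr2, mul_zero, Finset.sum_const_zero]
    have e : (∑ j, ∑ l, ginv j l * Q j l)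
        = ∑ a, Xup a * (∑ j, ∑ l, ginv j l * P a j l) := by
      simp only [hQ]
      rw [show (∑ j, ∑ l, ginv j l * ∑ a, Xup a * P a j l)
          = ∑ j, ∑ l, ∑ a, ginv j l * (Xup a * P a j l) from
        Finset.sum_congr rfl fun j _ => Finset.sum_congr rfl fun l _ => Finset.mul_sum _ _ _]
      rw [sum_pull3]
      refine Finset.sum_congr rfl fun a _ => ?_
      rw [Finset.mul_sum]
      refine Finset.sum_congr rfl fun j _ => ?_
      rw [Finset.mul_sum]
      exact Finset.sum_congr rfl fun l _ => by ring
    rw [e]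
    simp only [e2, mul_zero, Finset.sum_const_zero]
  -- the key step: s0 * Q = 0
  have hsQ : ∀ k m, s0 * Q k m = 0 := by
    intro k m
    have hL : (∑ j, ∑ l, ginv j l * (s0 ^ 2 * C j k l m)) = 0 := by
      rw [show (∑ j, ∑ l, ginv j l * (s0 ^ 2 * C j k l m))
          = s0 ^ 2 * ∑ j, ∑ l, ginv j l * C j k l m from by
        rw [Finset.mul_sum]
        refine Finset.sum_congr rfl fun j _ => ?_
        rw [Finset.mul_sum]
        exact Finset.sum_congr rfl fun l _ => by ring]
      rw [hTrace k m, mul_zero]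
    have hR : (∑ j, ∑ l, ginv j l * (s0 ^ 2 * C j k l m))
        = (∑ j, ∑ l, ginv j l * (X j * (X m * Q k l)))
          - (∑ j, ∑ l, ginv j l * (X j * (X l * Q k m)))
          - (∑ j, ∑ l, ginv j l * ((X k * X m) * Q j l))
          + (∑ j, ∑ l, ginv j l * (X l * (X k * Q j m))) := by
      simp only [← Finset.sum_add_distrib, ← Finset.sum_sub_distrib]
      refine Finset.sum_congr rfl fun j _ => Finset.sum_congr rfl fun l _ => ?_
      linear_combination ginv j l * eq4 j k l m
    have E1 : (∑ j, ∑ l, ginv j l * (X j * (X m * Q k l))) = 0 := by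
      rw [contr1]
      rw [show (∑ l, Xup l * (X m * Q k l)) = X m * ∑ l, Xup l * Q k l from by
        rw [Finset.mul_sum]; exact Finset.sum_congr rfl fun l _ => by ring]
      rw [fQ2 k, mul_zero]
    have E2 : (∑ j, ∑ l, ginv j l * (X j * (X l * Q k m))) = s0 * Q k m := by
      rw [contr1]
      rw [show (∑ l, Xup l * (X l * Q k m)) = (∑ l, Xup l * X l) * Q k m from by
        rw [Finset.sum_mul]; exact Finset.sum_congr rfl fun l _ => by ring]
    have E3 : (∑ j, ∑ l, ginv j l * ((X k * X m) * Q j l)) = 0 := by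
      rw [show (∑ j, ∑ l, ginv j l * ((X k * X m) * Q j l))
          = (X k * X m) * ∑ j, ∑ l, ginv j l * Q j l from by
        rw [Finset.mul_sum]
        refine Finset.sum_congr rfl fun j _ => ?_
        rw [Finset.mul_sum]
        exact Finset.sum_congr rfl fun l _ => by ring]
      rw [fQtrace, mul_zero]
    have E4 : (∑ j, ∑ l, ginv j l * (X l * (X k * Q j m))) = 0 := by
      rw [contr2]
      rw [show (∑ j, Xup j * (X k * Q j m)) = X k * ∑ j, Xup j * Q j m from by
        rw [Finset.mul_sum]; exact Finset.sum_congr rfl fun j _ => by ring]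
      rw [fR m, mul_zero]
    rw [hR, E1, E2, E3, E4] at hL
    linarith
  -- conclude
  obtain ⟨j0, k0, l0, m0, hne⟩ := hC
  have key : s0 ^ 3 * C j0 k0 l0 m0 = 0 := by
    have h4 := eq4 j0 k0 l0 m0
    have q1 := hsQ k0 l0
    have q2 := hsQ k0 m0
    have q3 := hsQ j0 l0
    have q4 := hsQ j0 m0
    linear_combination s0 * h4 + X j0 * X m0 * q1 - X j0 * X l0 * q2
      - X k0 * X m0 * q3 + X l0 * X k0 * q4
  have hcube : s0 ^ 3 = 0 := by
    rcases mul_eq_zero.mp key with h | h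
    · exact h
    · exact absurd h hne
  have hs00 : s0 = 0 := by
    exact (pow_eq_zero_iff three_ne_zero).mp hcube
  rw [hgoal]
  exact hs00
end

section
/- Let C be a nonzero (0,4)-tensor with Weyl symmetries on a Lorentzian vector space. The set of covectors X satisfying the Olszak condition X_i C_{jklm} + X_j C_{kilm} + X_k C_{ijlm} = 0 is a subspace of dimension at most 1. -/
/-- The standard Lorentzian (Minkowski) metric components on `ℝⁿ`, signature `(-,+,...,+)`;
it coincides with its own inverse. -/
def lor (n : ℕ) (i j : Fin n) : ℝ :=
  if i = j then (if (i : ℕ) = 0 then (-1 : ℝ) else 1) else 0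

lemma lor_diag_sum (n : ℕ) (f : Fin n → Fin n → ℝ) :
    ∑ j, ∑ l, lor n j l * f j l
      = ∑ j : Fin n, (if (j : ℕ) = 0 then (-1 : ℝ) else 1) * f j j := by
  apply Finset.sum_congr rfl
  intro j _
  rw [Finset.sum_eq_single j]
  · simp [lor]
  · intro l _ hl
    simp [lor, Ne.symm hl]
  · simp

/-- On a Lorentzian vector space, the set of covectors satisfying the Olszak condition for a
nonzero tensor `C` with Weyl symmetries is a subspace of dimension at most 1. -/
theorem stmt_3 (n : ℕ) (hn : 2 ≤ n)
    (C : Fin n → Fin n → Fin n → Fin n → ℝ)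
    (hA1 : ∀ j k l m, C j k l m = - C k j l m)
    (hA2 : ∀ j k l m, C j k l m = - C j k m l)
    (hPair : ∀ j k l m, C j k l m = C l m j k)
    (hBianchi : ∀ j k l m, C j k l m + C k l j m + C l j k m = 0)
    (hTrace : ∀ k m, ∑ j, ∑ l, lor n j l * C j k l m = 0)
    (hC : C ≠ 0) :
    ∃ S : Submodule ℝ (Fin n → ℝ),
      (∀ X : Fin n → ℝ, X ∈ S ↔
        ∀ i j k l m, X i * C j k l m + X j * C k i l m + X k * C i j l m = 0) ∧
      Module.rank ℝ ↥S ≤ 1 := by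
  haveI : NeZero n := ⟨by omega⟩
  set ε : Fin n → ℝ := fun i => if (i : ℕ) = 0 then (-1 : ℝ) else 1 with hε
  -- trace identity in diagonal form
  have htr : ∀ k m, ∑ j, ε j * C j k j m = 0 := by
    intro k m
    have := hTrace k m
    rwa [lor_diag_sum] at this
  -- the Olszak predicate
  set P : (Fin n → ℝ) → Prop :=
    fun X => ∀ i j k l m, X i * C j k l m + X j * C k i l m + X k * C i j l m = 0 with hP
  -- slot-3 contraction vanishes for Olszak covectors
  have hD1 : ∀ X, P X → ∀ j k m, ∑ i, ε i * (X i * C j k i m) = 0 := by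
    intro X hX j k m
    have h1 : ∀ i, C i i k m = 0 := by
      intro i; have := hA1 i i k m; linarith
    have h2 : ∀ i, C k i i m = - C i k i m := by
      intro i; have := hBianchi k i i m; have := h1 i; linarith
    have expand : ∑ i, ε i * (X i * C j k i m + X j * C k i i m + X k * C i j i m)
        = (∑ i, ε i * (X i * C j k i m)) + X j * (∑ i, ε i * C k i i m)
          + X k * (∑ i, ε i * C i j i m) := by
      rw [Finset.mul_sum, Finset.mul_sum, ← Finset.sum_add_distrib, ← Finset.sum_add_distrib]
      apply Finset.sum_congr rfl
      intros; ring
    have hzero : ∑ i, ε i * (X i * C j k i m + X j * C k i i m + X k * C i j i m) = 0 := by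
      apply Finset.sum_eq_zero
      intro i _
      rw [hX i j k i m, mul_zero]
    have hs2 : (∑ i, ε i * C k i i m) = 0 := by
      have he : (∑ i, ε i * C k i i m) = -∑ i, ε i * C i k i m := by
        rw [← Finset.sum_neg_distrib]
        apply Finset.sum_congr rfl
        intro i _
        rw [h2 i]; ring
      rw [he, htr k m, neg_zero]
    have hs3 : (∑ i, ε i * C i j i m) = 0 := htr j m
    rw [expand, hs2, hs3] at hzero
    linarith
  -- slot-1 contraction
  have hS1 : ∀ X, P X → ∀ j l m, ∑ i, ε i * (X i * C i j l m) = 0 := by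
    intro X hX j l m
    have h := hD1 X hX l m j
    calc ∑ i, ε i * (X i * C i j l m) = ∑ i, ε i * (X i * C l m i j) := by
          apply Finset.sum_congr rfl; intro i _; rw [hPair i j l m]
      _ = 0 := h
  -- slot-2 contraction
  have hS2 : ∀ X, P X → ∀ k l m, ∑ i, ε i * (X i * C k i l m) = 0 := by
    intro X hX k l m
    have h := hS1 X hX k l m
    calc ∑ i, ε i * (X i * C k i l m) = ∑ i, -(ε i * (X i * C i k l m)) := by
          apply Finset.sum_congr rfl; intro i _; rw [hA1 k i l m]; ring
      _ = -∑ i, ε i * (X i * C i k l m) := by rw [Finset.sum_neg_distrib]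
      _ = 0 := by rw [h, neg_zero]
  -- a nonzero component of C
  obtain ⟨j₀, k₀, l₀, m₀, hC0⟩ : ∃ j k l m, C j k l m ≠ 0 := by
    by_contra h
    push_neg at h
    exact hC (by funext j k l m; exact h j k l m)
  -- mutual nullity of Olszak covectors
  have hQ : ∀ X Z, P X → P Z → ∑ i, ε i * X i * Z i = 0 := by
    intro X Z hX hZ
    have key : (∑ i, ε i * X i * Z i) * C j₀ k₀ l₀ m₀ = 0 := by
      have expand : ∑ i, ε i * Z i * (X i * C j₀ k₀ l₀ m₀ + X j₀ * C k₀ i l₀ m₀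
            + X k₀ * C i j₀ l₀ m₀)
          = (∑ i, ε i * X i * Z i) * C j₀ k₀ l₀ m₀
            + X j₀ * (∑ i, ε i * (Z i * C k₀ i l₀ m₀))
            + X k₀ * (∑ i, ε i * (Z i * C i j₀ l₀ m₀)) := by
        rw [Finset.sum_mul, Finset.mul_sum, Finset.mul_sum,
          ← Finset.sum_add_distrib, ← Finset.sum_add_distrib]
        apply Finset.sum_congr rfl
        intros; ring
      have hzero : ∑ i, ε i * Z i * (X i * C j₀ k₀ l₀ m₀ + X j₀ * C k₀ i l₀ m₀
          + X k₀ * C i j₀ l₀ m₀) = 0 := by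
        apply Finset.sum_eq_zero
        intro i _
        rw [hX i j₀ k₀ l₀ m₀, mul_zero]
      rw [expand, hS2 Z hZ k₀ l₀ m₀, hS1 Z hZ j₀ l₀ m₀] at hzero
      linarith
    exact (mul_eq_zero.mp key).resolve_right hC0
  -- split the quadratic form at index 0
  have hsplit : ∀ U V : Fin n → ℝ, ∑ i, ε i * U i * V i
      = -(U 0 * V 0) + ∑ i ∈ Finset.univ.erase 0, U i * V i := by
    intro U V
    rw [← Finset.add_sum_erase _ _ (Finset.mem_univ (0 : Fin n))]
    congr 1
    · simp [hε]
    · apply Finset.sum_congr rfl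
      intro i hi
      have h1 : i ≠ 0 := (Finset.mem_erase.mp hi).1
      have h2 : (i : ℕ) ≠ 0 := fun h => h1 (Fin.ext (by simpa using h))
      simp [hε, h2, h1]
  -- the submodule
  refine ⟨{ carrier := {X | P X}
            add_mem' := ?_
            zero_mem' := ?_
            smul_mem' := ?_ }, ?_, ?_⟩
  · intro X Y hX hY i j k l m
    simp only [Pi.add_apply]
    have h1 := hX i j k l m
    have h2 := hY i j k l m
    linear_combination h1 + h2
  · intro i j k l m
    simp
  · intro c X hX i j k l m
    simp only [Pi.smul_apply, smul_eq_mul]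
    have h1 := hX i j k l m
    linear_combination c * h1
  · intro X
    exact Iff.rfl
  · -- rank ≤ 1
    rw [rank_le_one_iff]
    by_cases hex : ∃ X, P X ∧ X ≠ 0
    · obtain ⟨X, hXP, hX0⟩ := hex
      refine ⟨⟨X, hXP⟩, ?_⟩
      rintro ⟨Z, hZP⟩
      have qXX := hQ X X hXP hXP
      have qZZ := hQ Z Z hZP hZP
      have qXZ := hQ X Z hXP hZP
      rw [hsplit] at qXX qZZ qXZ
      set a := X 0 with ha
      set b := Z 0 with hb
      have sXX : ∑ i ∈ Finset.univ.erase 0, X i * X i = a * a := by linarith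
      have sZZ : ∑ i ∈ Finset.univ.erase 0, Z i * Z i = b * b := by linarith
      have sXZ : ∑ i ∈ Finset.univ.erase 0, X i * Z i = a * b := by linarith
      have haz : a ≠ 0 := by
        intro h0
        apply hX0
        have hzz : ∑ i ∈ Finset.univ.erase 0, X i * X i = 0 := by rw [sXX, h0, mul_zero]
        have hnn : ∀ i ∈ Finset.univ.erase (0 : Fin n), 0 ≤ X i * X i :=
          fun i _ => mul_self_nonneg _
        have hall := (Finset.sum_eq_zero_iff_of_nonneg hnn).mp hzz
        funext i
        by_cases hi : i = 0
        · rw [hi, ← ha]; exact h0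
        · have h3 := hall i (Finset.mem_erase.mpr ⟨hi, Finset.mem_univ i⟩)
          show X i = 0
          nlinarith [h3]
      have key : ∑ i ∈ Finset.univ.erase 0, (b * X i - a * Z i) ^ 2 = 0 := by
        have e1 : ∑ i ∈ Finset.univ.erase 0, (b * X i - a * Z i) ^ 2
            = b ^ 2 * (∑ i ∈ Finset.univ.erase 0, X i * X i)
              - (2 * a * b) * (∑ i ∈ Finset.univ.erase 0, X i * Z i)
              + a ^ 2 * (∑ i ∈ Finset.univ.erase 0, Z i * Z i) := by
          rw [Finset.mul_sum, Finset.mul_sum, Finset.mul_sum,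
            ← Finset.sum_sub_distrib, ← Finset.sum_add_distrib]
          apply Finset.sum_congr rfl
          intros; ring
        rw [e1, sXX, sXZ, sZZ]; ring
      have hall : ∀ i, b * X i = a * Z i := by
        intro i
        by_cases hi : i = 0
        · rw [hi, ← ha, ← hb]; ring
        · have hmem : i ∈ Finset.univ.erase (0 : Fin n) :=
            Finset.mem_erase.mpr ⟨hi, Finset.mem_univ i⟩
          have hnn : ∀ i ∈ Finset.univ.erase (0 : Fin n), 0 ≤ (b * X i - a * Z i) ^ 2 :=
            fun i _ => sq_nonneg _
          have h4 := (Finset.sum_eq_zero_iff_of_nonneg hnn).mp key i hmem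
          have h5 := sq_eq_zero_iff.mp h4
          linarith
      refine ⟨b / a, ?_⟩
      apply Subtype.ext
      show (b / a) • X = Z
      funext i
      have h6 := hall i
      simp only [Pi.smul_apply, smul_eq_mul]
      field_simp
      linear_combination h6
    · push_neg at hex
      refine ⟨0, ?_⟩
      rintro ⟨Z, hZP⟩
      have hZ0 : Z = 0 := hex Z hZP
      refine ⟨0, ?_⟩
      apply Subtype.ext
      simp [hZ0]
end

section
/- On an n-dimensional pp-wave space-time (n ≥ 4), the twice-contracted second Bianchi identity together with R = 0 and Ricci semi-symmetry ([∇_i,∇_j]R_{kl} = 0) yields ∇^j ∇^m C_{jklm} = −((n−3)/(n−2)) ∇^2 R_{kl}; in particular ∇^2 R_{kl} = 0 if and only if ∇^j ∇^m C_{jklm} = 0. -/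
/-- On an `n ≥ 4` dimensional pp-wave space-time, the twice-contracted second Bianchi
identity, `R = 0` (so all derivatives of `R` vanish) and Ricci semi-symmetry yield
`∇^j ∇^m C_{jklm} = -((n-3)/(n-2)) ∇² R_{kl}`; in particular `∇² R_{kl} = 0` iff
`∇^j ∇^m C_{jklm} = 0`.  Here `DdivC x i j k l` denotes `∇_i (∇_m C_{jkl}{}^m)`,
`DDRic x i j k l` denotes `∇_i ∇_j R_{kl}` and `DDR x i j` denotes `∇_i ∇_j R`. -/
theorem stmt_7 {M ι : Type*} [Fintype ι] [DecidableEq ι]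
    (n : ℕ) (hn : 4 ≤ n) (hcard : Fintype.card ι = n)
    (g ginv : M → ι → ι → ℝ)
    (hgsym : ∀ x i j, g x i j = g x j i)
    (hginvsym : ∀ x i j, ginv x i j = ginv x j i)
    (hginv : ∀ x i j, ∑ k, g x i k * ginv x k j = if i = j then (1 : ℝ) else 0)
    (DdivC : M → ι → ι → ι → ι → ℝ)
    (DDRic : M → ι → ι → ι → ι → ℝ)
    (DDR : M → ι → ι → ℝ)
    (hDDR : ∀ x i j, DDR x i j = 0)
    (hsemi : ∀ x i j k l, DDRic x i j k l = DDRic x j i k l)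
    -- the covariant derivative of the general divergence formula for the Weyl tensor
    (hdiv : ∀ x i j k l, DdivC x i j k l
      = ((n : ℝ) - 3) / ((n : ℝ) - 2) * (DDRic x i k j l - DDRic x i j k l)
        + ((n : ℝ) - 3) / (2 * ((n : ℝ) - 1) * ((n : ℝ) - 2))
          * (g x k l * DDR x i j - g x j l * DDR x i k))
    -- the differentiated twice-contracted second Bianchi identity ∇_i ∇^j R_{jl} = ½ ∇_i ∇_l R
    (hBianchi : ∀ x i l, ∑ j, ∑ p, ginv x j p * DDRic x i j p l = (1 / 2) * DDR x i l) :
    (∀ x k l, ∑ j, ∑ p, ginv x j p * DdivC x p j k l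
        = -(((n : ℝ) - 3) / ((n : ℝ) - 2)) * ∑ i, ∑ p, ginv x i p * DDRic x i p k l) ∧
    ((∀ x k l, ∑ i, ∑ p, ginv x i p * DDRic x i p k l = 0) ↔
      (∀ x k l, ∑ j, ∑ p, ginv x j p * DdivC x p j k l = 0)) := by
  have hc : (((n : ℝ) - 3) / ((n : ℝ) - 2)) ≠ 0 := by
    have h4 : (4 : ℝ) ≤ (n : ℝ) := by exact_mod_cast hn
    have h3 : (n : ℝ) - 3 ≠ 0 := by linarith
    have h2 : (n : ℝ) - 2 ≠ 0 := by linarith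
    exact div_ne_zero h3 h2
  have key : ∀ x k l, ∑ j, ∑ p, ginv x j p * DdivC x p j k l
      = -(((n : ℝ) - 3) / ((n : ℝ) - 2)) * ∑ i, ∑ p, ginv x i p * DDRic x i p k l := by
    intro x k l
    have h1 : ∑ j, ∑ p, ginv x j p * DDRic x p k j l = 0 := by
      have hb := hBianchi x k l
      rw [hDDR x k l, mul_zero] at hb
      calc ∑ j, ∑ p, ginv x j p * DDRic x p k j l
          = ∑ j, ∑ p, ginv x p j * DDRic x k p j l := by
            refine Finset.sum_congr rfl fun j _ => Finset.sum_congr rfl fun p _ => ?_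
            rw [hginvsym, hsemi]
        _ = ∑ p, ∑ j, ginv x p j * DDRic x k p j l := Finset.sum_comm
        _ = 0 := hb
    have h2 : ∑ j, ∑ p, ginv x j p * DDRic x p j k l
        = ∑ i, ∑ p, ginv x i p * DDRic x i p k l := by
      refine Finset.sum_congr rfl fun j _ => Finset.sum_congr rfl fun p _ => ?_
      rw [hsemi]
    calc ∑ j, ∑ p, ginv x j p * DdivC x p j k l
        = ∑ j, ∑ p, (((n : ℝ) - 3) / ((n : ℝ) - 2))
            * (ginv x j p * DDRic x p k j l - ginv x j p * DDRic x p j k l) := by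
          refine Finset.sum_congr rfl fun j _ => Finset.sum_congr rfl fun p _ => ?_
          rw [hdiv, hDDR, hDDR]; ring
      _ = (((n : ℝ) - 3) / ((n : ℝ) - 2))
            * ((∑ j, ∑ p, ginv x j p * DDRic x p k j l)
              - ∑ j, ∑ p, ginv x j p * DDRic x p j k l) := by
          simp [Finset.mul_sum, mul_sub, Finset.sum_sub_distrib]
      _ = -(((n : ℝ) - 3) / ((n : ℝ) - 2)) * ∑ i, ∑ p, ginv x i p * DDRic x i p k l := by
          rw [h1, h2]; ring
  refine ⟨key, ?_, ?_⟩
  · intro h x k l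
    rw [key, h, mul_zero]
  · intro h x k l
    have := h x k l
    rw [key] at this
    rcases mul_eq_zero.mp this with h' | h'
    · exact absurd h' (neg_ne_zero.mpr hc)
    · exact h'
end

section
/- On a pp-wave space-time of dimension n ≥ 4 with Ricci tensor R_{kl} = ψ X_k X_l (X covariantly constant and null) and R = 0, the divergence of the Weyl tensor is ∇_m C_{jkl}{}^m = ((n−3)/(n−2)) [(∇_k ψ) X_j − (∇_j ψ) X_k] X_l; hence ∇_m C_{jkl}{}^m = 0 if and only if ∇_k ψ = λ X_k for some scalar function λ. -/
/-- On a pp-wave space-time of dimension `n ≥ 4` with Ricci tensor `R_{kl} = ψ X_k X_l`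
(`X` covariantly constant and null) and `R = 0`, the divergence of the Weyl tensor equals
`((n-3)/(n-2)) [(∇_k ψ) X_j - (∇_j ψ) X_k] X_l`; hence it vanishes iff `∇_k ψ = λ X_k`. -/
theorem stmt_8 {M ι : Type*} [Fintype ι] [DecidableEq ι]
    (n : ℕ) (hn : 4 ≤ n) (hcard : Fintype.card ι = n)
    (g ginv : M → ι → ι → ℝ)
    (hgsym : ∀ x i j, g x i j = g x j i)
    (hginv : ∀ x i j, ∑ k, g x i k * ginv x k j = if i = j then (1 : ℝ) else 0)
    (ψ : M → ℝ) (X : M → ι → ℝ) (hX : ∀ x, X x ≠ 0)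
    (hnull : ∀ x, ∑ k, ∑ k', ginv x k k' * X x k * X x k' = 0)
    (Dψ : M → ι → ℝ)
    (DRic : M → ι → ι → ι → ℝ)
    (hDRic : ∀ x j k l, DRic x j k l = Dψ x j * X x k * X x l)  -- since ∇X = 0
    (DR : M → ι → ℝ) (hDR : ∀ x j, DR x j = 0)  -- scalar curvature vanishes
    (divC : M → ι → ι → ι → ℝ)
    (hdiv : ∀ x j k l, divC x j k l
      = ((n : ℝ) - 3) / ((n : ℝ) - 2) * (DRic x k j l - DRic x j k l)
        + ((n : ℝ) - 3) / (2 * ((n : ℝ) - 1) * ((n : ℝ) - 2))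
          * (g x k l * DR x j - g x j l * DR x k)) :
    (∀ x j k l, divC x j k l
      = ((n : ℝ) - 3) / ((n : ℝ) - 2) * ((Dψ x k * X x j - Dψ x j * X x k) * X x l)) ∧
    ((∀ x j k l, divC x j k l = 0) ↔ ∃ lam : M → ℝ, ∀ x k, Dψ x k = lam x * X x k) := by
  have hform : ∀ x j k l, divC x j k l
      = ((n : ℝ) - 3) / ((n : ℝ) - 2) * ((Dψ x k * X x j - Dψ x j * X x k) * X x l) := by
    intro x j k l
    rw [hdiv, hDRic, hDRic, hDR, hDR]
    ring
  have hc : ((n : ℝ) - 3) / ((n : ℝ) - 2) ≠ 0 := by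
    have h4 : (4 : ℝ) ≤ (n : ℝ) := by exact_mod_cast hn
    apply div_ne_zero <;> nlinarith
  refine ⟨hform, ?_, ?_⟩
  · intro h0
    have hex : ∀ x : M, ∃ l0, X x l0 ≠ 0 := by
      intro x
      simpa [Function.ne_iff] using hX x
    choose l0 hl0 using hex
    refine ⟨fun x => Dψ x (l0 x) / X x (l0 x), fun x k => ?_⟩
    have hkey : Dψ x k * X x (l0 x) - Dψ x (l0 x) * X x k = 0 := by
      have := h0 x (l0 x) k (l0 x)
      rw [hform] at this
      rcases mul_eq_zero.mp this with h | h
      · exact absurd h hc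
      · rcases mul_eq_zero.mp h with h | h
        · exact h
        · exact absurd h (hl0 x)
    rw [div_mul_eq_mul_div, eq_div_iff (hl0 x)]
    linarith [hkey]
  · rintro ⟨lam, hlam⟩ x j k l
    rw [hform, hlam, hlam]
    ring
end

section
/- Let X be a covector satisfying the Olszak condition for the Riemann tensor: X_i R_{jklm} + X_j R_{kilm} + X_k R_{ijlm} = 0, and suppose the Ricci tensor satisfies R_{ij} = ψ X_i X_j with X null. Then X^m R_{jklm} = 0 and X^m C_{jklm} = 0. -/
/-- Pointwise: if `X` satisfies the Olszak condition for the Riemann tensor and the Ricci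
tensor is `R_{ij} = ψ X_i X_j` with `X` null, then `X^m R_{jklm} = 0` and `X^m C_{jklm} = 0`,
where `C` is the associated Weyl tensor.  The paper's convention `R_{ij} = -R_{kij}{}^k`
is used for the Ricci tensor. -/
theorem stmt_13 {ι : Type*} [Fintype ι] [DecidableEq ι]
    (n : ℕ) (hn : 4 ≤ n) (hcard : Fintype.card ι = n)
    (g ginv : ι → ι → ℝ)
    (hgsym : ∀ i j, g i j = g j i)
    (hginvsym : ∀ i j, ginv i j = ginv j i)
    (hginv : ∀ i j, ∑ k, g i k * ginv k j = if i = j then (1 : ℝ) else 0)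
    (Riem : ι → ι → ι → ι → ℝ)
    (hA1 : ∀ j k l m, Riem j k l m = - Riem k j l m)
    (hA2 : ∀ j k l m, Riem j k l m = - Riem j k m l)
    (hPair : ∀ j k l m, Riem j k l m = Riem l m j k)
    (hBianchi : ∀ j k l m, Riem j k l m + Riem k l j m + Riem l j k m = 0)
    (ψ : ℝ) (X : ι → ℝ)
    (hnull : ∑ i, ∑ i', ginv i i' * X i * X i' = 0)
    -- Ricci tensor R_{ij} = -R_{kij}{}^k equals ψ X_i X_j
    (hRic : ∀ i j, -(∑ k, ∑ m, ginv k m * Riem k i j m) = ψ * X i * X j)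
    (C : ι → ι → ι → ι → ℝ)
    (hC : ∀ j k l m, C j k l m = Riem j k l m
      + (1 / ((n : ℝ) - 2)) * (g j m * (ψ * X k * X l) - g k m * (ψ * X j * X l)
          + g k l * (ψ * X j * X m) - g j l * (ψ * X k * X m))
      - (∑ i, ∑ i', ginv i i' * (ψ * X i * X i'))
          * (g j m * g k l - g k m * g j l) / (((n : ℝ) - 1) * ((n : ℝ) - 2)))
    (hOlszak : ∀ i j k l m,
      X i * Riem j k l m + X j * Riem k i l m + X k * Riem i j l m = 0) :
    (∀ j k l, ∑ m, ∑ m', ginv m m' * X m' * Riem j k l m = 0) ∧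
    (∀ j k l, ∑ m, ∑ m', ginv m m' * X m' * C j k l m = 0) := by
  -- contraction of the Riemann tensor over slots 1 and 4
  have hRic' : ∀ i j, (∑ a, ∑ b, ginv a b * Riem a i j b) = -(ψ * X i * X j) := by
    intro i j
    have := hRic i j
    linarith
  -- contraction over slots 2 and 4
  have hC2 : ∀ k l, (∑ a, ∑ b, ginv a b * Riem k a l b) = ψ * X k * X l := by
    intro k l
    have e : ∀ a b, ginv a b * Riem k a l b = -(ginv a b * Riem a k l b) := by
      intro a b; rw [hA1 k a]; ring
    simp_rw [e, Finset.sum_neg_distrib, hRic' k l]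
    ring
  -- first conclusion
  have hT : ∀ j k l, ∑ m, ∑ m', ginv m m' * X m' * Riem j k l m = 0 := by
    intro j k l
    have h0 : ∑ i, ∑ m, ginv i m *
        (X i * Riem j k l m + X j * Riem k i l m + X k * Riem i j l m) = 0 := by
      simp_rw [hOlszak, mul_zero, Finset.sum_const_zero]
    have e : ∀ i m, ginv i m *
        (X i * Riem j k l m + X j * Riem k i l m + X k * Riem i j l m)
        = ginv i m * X i * Riem j k l m + X j * (ginv i m * Riem k i l m)
          + X k * (ginv i m * Riem i j l m) := by intro i m; ring
    simp_rw [e, Finset.sum_add_distrib, ← Finset.mul_sum] at h0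
    rw [hC2 k l, hRic' j l] at h0
    -- relate first piece of h0 to the goal sum
    have hswap : (∑ i, ∑ m, ginv i m * X i * Riem j k l m)
        = ∑ m, ∑ m', ginv m m' * X m' * Riem j k l m := by
      rw [Finset.sum_comm]
      refine Finset.sum_congr rfl fun m _ => Finset.sum_congr rfl fun i _ => ?_
      rw [hginvsym i m]
    rw [hswap] at h0
    have : X j * (ψ * X k * X l) + X k * -(ψ * X j * X l) = 0 := by ring
    linarith
  refine ⟨hT, ?_⟩
  -- the scalar curvature term vanishes
  have hS : (∑ i, ∑ i', ginv i i' * (ψ * X i * X i')) = 0 := by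
    have e : ∀ i i', ginv i i' * (ψ * X i * X i') = ψ * (ginv i i' * X i * X i') := by
      intro i i'; ring
    simp_rw [e, ← Finset.mul_sum, hnull, mul_zero]
  -- lowering lemma: ∑ g^{m m'} X_{m'} g_{j m} = X_j
  have hLg : ∀ j, ∑ m, ∑ m', ginv m m' * X m' * g j m = X j := by
    intro j
    rw [Finset.sum_comm]
    have e : ∀ m' m, ginv m m' * X m' * g j m = (g j m * ginv m m') * X m' := by
      intro m' m; rw [hginvsym]; ring
    simp_rw [e, ← Finset.sum_mul, hginv]
    simp
  -- nullity in the needed form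
  have hN : (∑ m, ∑ m', ginv m m' * X m' * X m) = 0 := by
    have e : ∀ m m', ginv m m' * X m' * X m = ginv m m' * X m * X m' := by
      intro m m'; ring
    simp_rw [e]; exact hnull
  intro j k l
  have hC' : ∀ m m', ginv m m' * X m' * C j k l m
      = ginv m m' * X m' * Riem j k l m
        + (1 / ((n : ℝ) - 2) * (ψ * X k * X l)) * (ginv m m' * X m' * g j m)
        - (1 / ((n : ℝ) - 2) * (ψ * X j * X l)) * (ginv m m' * X m' * g k m)
        + (1 / ((n : ℝ) - 2) * (g k l * (ψ * X j))) * (ginv m m' * X m' * X m)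
        - (1 / ((n : ℝ) - 2) * (g j l * (ψ * X k))) * (ginv m m' * X m' * X m) := by
    intro m m'
    rw [hC, hS]
    ring
  simp_rw [hC']
  simp only [Finset.sum_add_distrib, Finset.sum_sub_distrib]
  simp only [← Finset.mul_sum]
  rw [hT j k l, hLg j, hLg k, hN]
  ring
end

section
/- Let C be a nowhere-zero tensor field satisfying the Olszak condition X_iC_{jklm}+X_jC_{kilm}+X_kC_{ijlm}=0 for a 1-form X, and the recurrence ∇_pC_{jklm} = α_pC_{jklm}; if the Olszak distribution is one-dimensional and spanned by α, then differentiating α's Olszak condition yields (∇_pα_i)C_{jklm}+(∇_pα_j)C_{kilm}+(∇_pα_k)C_{ijlm}=0, hence ∇_i α_j = p_i α_j for some 1-form p. -/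
/-- On a Lorentzian manifold with nowhere-zero recurrent Weyl tensor whose Olszak
distribution is one-dimensional and spanned by the recurrence 1-form `α`, differentiating
the Olszak condition for `α` yields
`(∇_p α_i) C_{jklm} + (∇_p α_j) C_{kilm} + (∇_p α_k) C_{ijlm} = 0`,
hence `∇_p α_i = p_p α_i` for some 1-form `p`. -/
theorem stmt_17 {M ι : Type*} [Fintype ι] [DecidableEq ι]
    (C : M → ι → ι → ι → ι → ℝ)
    (hC : ∀ x, ∃ j k l m, C x j k l m ≠ 0)
    (α : M → ι → ℝ)
    (holszak : ∀ x i j k l m,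
      α x i * C x j k l m + α x j * C x k i l m + α x k * C x i j l m = 0)
    (DC : M → ι → ι → ι → ι → ι → ℝ)
    (hrec : ∀ x q j k l m, DC x q j k l m = α x q * C x j k l m)
    (Dα : M → ι → ι → ℝ)
    -- covariant derivative of the Olszak identity for α (Leibniz rule)
    (hdiff : ∀ x q i j k l m,
      (Dα x q i * C x j k l m + α x i * DC x q j k l m)
      + (Dα x q j * C x k i l m + α x j * DC x q k i l m)
      + (Dα x q k * C x i j l m + α x k * DC x q i j l m) = 0)
    -- the Olszak distribution is one-dimensional, spanned by α
    (hdim : ∀ x (Y : ι → ℝ),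
      (∀ i j k l m, Y i * C x j k l m + Y j * C x k i l m + Y k * C x i j l m = 0) →
      ∃ c : ℝ, Y = c • α x) :
    (∀ x q i j k l m,
      Dα x q i * C x j k l m + Dα x q j * C x k i l m + Dα x q k * C x i j l m = 0) ∧
    (∃ p : M → ι → ℝ, ∀ x q i, Dα x q i = p x q * α x i) := by
  have key : ∀ x q i j k l m,
      Dα x q i * C x j k l m + Dα x q j * C x k i l m + Dα x q k * C x i j l m = 0 := by
    intro x q i j k l m
    have h := hdiff x q i j k l m
    simp only [hrec] at h
    have h2 := holszak x i j k l m
    linear_combination h - α x q * h2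
  refine ⟨key, ?_⟩
  have hc : ∀ x q, ∃ c : ℝ, Dα x q = c • α x := fun x q => hdim x _ (key x q)
  choose p hp using hc
  exact ⟨p, fun x q i => by rw [hp x q]; rfl⟩
end
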